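/- Square of the shifted persistent Dirac operator: for every ξ ∈ ℝ and all (x, y, z) ∈ V ⊕ A ⊕ U, D_ξ²(x, y, z) = ((δ ∘ δ†) x + ξ² x, L y + ξ² y, (∂'† ∘ ∂') z + ξ² z), where L = ∂' ∘ ∂'† + δ† ∘ δ is the persistent Laplacian; in particular the middle block of D_ξ² equals the persistent Laplacian shifted by ξ². -/
import Mathlib


open scoped RealInnerProductSpace

/-- The shifted persistent Dirac operator on `V ⊕ A ⊕ U`:
`D_ξ(x, y, z) = (δ y − ξ x, δ† x + ∂' z + ξ y, ∂'† y − ξ z)`. -/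
noncomputable def shiftedPersistentDirac {V A U : Type*}
    [NormedAddCommGroup V] [InnerProductSpace ℝ V] [FiniteDimensional ℝ V]
    [NormedAddCommGroup A] [InnerProductSpace ℝ A] [FiniteDimensional ℝ A]
    [NormedAddCommGroup U] [InnerProductSpace ℝ U] [FiniteDimensional ℝ U]
    (del : A →ₗ[ℝ] V) (dP : U →ₗ[ℝ] A) (ξ : ℝ) :
    V × A × U → V × A × U :=
  fun p =>
    (del p.2.1 - ξ • p.1,
     LinearMap.adjoint del p.1 + dP p.2.2 + ξ • p.2.1,
     LinearMap.adjoint dP p.2.1 - ξ • p.2.2)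

/-- Square of the shifted persistent Dirac operator: for every `ξ ∈ ℝ`,
`D_ξ²(x, y, z) = ((δ∘δ†) x + ξ² x, L y + ξ² y, (∂'†∘∂') z + ξ² z)`, where
`L = ∂' ∘ ∂'† + δ† ∘ δ` is the persistent Laplacian. -/
theorem shiftedPersistentDirac_sq {V A U : Type*}
    [NormedAddCommGroup V] [InnerProductSpace ℝ V] [FiniteDimensional ℝ V]
    [NormedAddCommGroup A] [InnerProductSpace ℝ A] [FiniteDimensional ℝ A]
    [NormedAddCommGroup U] [InnerProductSpace ℝ U] [FiniteDimensional ℝ U]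
    (del : A →ₗ[ℝ] V) (dP : U →ₗ[ℝ] A) (hc : del ∘ₗ dP = 0) :
    ∀ (ξ : ℝ) (x : V) (y : A) (z : U),
      shiftedPersistentDirac del dP ξ (shiftedPersistentDirac del dP ξ (x, y, z))
        = ((del ∘ₗ LinearMap.adjoint del) x + ξ ^ 2 • x,
           (dP ∘ₗ LinearMap.adjoint dP + LinearMap.adjoint del ∘ₗ del) y + ξ ^ 2 • y,
           (LinearMap.adjoint dP ∘ₗ dP) z + ξ ^ 2 • z) := by
  intro ξ x y z
  have h1 : ∀ a : U, del (dP a) = 0 := fun a => congrFun (congrArg DFunLike.coe hc) a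
  have hc' : LinearMap.adjoint dP ∘ₗ LinearMap.adjoint del = 0 := by
    rw [← LinearMap.adjoint_comp, hc, map_zero LinearMap.adjoint]
  have h2 : ∀ v : V, LinearMap.adjoint dP (LinearMap.adjoint del v) = 0 :=
    fun v => congrFun (congrArg DFunLike.coe hc') v
  simp only [shiftedPersistentDirac, LinearMap.map_add, LinearMap.map_sub, LinearMap.map_smul,
    LinearMap.comp_apply, LinearMap.add_apply, Prod.mk.injEq, h1, h2]
  refine ⟨?_, ?_, ?_⟩ <;> · rw [pow_two]; module
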